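/- Every generalized bitopological space (X, μ1, μ2) that is pairwise T1 and pairwise λ-symmetric is pairwise T_{1/2}. -/

import Mathlib

open Set

/-- A generalized topology on `X`: contains `∅` and is closed under arbitrary unions. -/
def IsGenTop {X : Type*} (μ : Set (Set X)) : Prop :=
  ∅ ∈ μ ∧ ∀ S ⊆ μ, ⋃₀ S ∈ μ

/-- `A` is μ-closed iff its complement is μ-open. -/
def gClosedSet {X : Type*} (μ : Set (Set X)) (A : Set X) : Prop := Aᶜ ∈ μ

/-- μ-closure: intersection of all μ-closed sets containing `A`. -/
def gCl {X : Type*} (μ : Set (Set X)) (A : Set X) : Set X :=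
  ⋂₀ {F | gClosedSet μ F ∧ A ⊆ F}

/-- `A^∧_μ`: intersection of all μ-open sets containing `A`. -/
def wedgeOp {X : Type*} (μ : Set (Set X)) (A : Set X) : Set X :=
  ⋂₀ {U | U ∈ μ ∧ A ⊆ U}

/-- `A^∨_μ`: union of all μ-closed sets contained in `A`. -/
def veeOp {X : Type*} (μ : Set (Set X)) (A : Set X) : Set X :=
  ⋃₀ {F | gClosedSet μ F ∧ F ⊆ A}

/-- `L` is a `∧_μ`-set. -/
def IsWedgeSet {X : Type*} (μ : Set (Set X)) (L : Set X) : Prop := L = wedgeOp μ L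

/-- `M` is a `∨_μ`-set. -/
def IsVeeSet {X : Type*} (μ : Set (Set X)) (M : Set X) : Prop := M = veeOp μ M

/-- `A` is `g_{μi}`-closed with respect to `μj`. -/
def GClosedWrt {X : Type*} (μi μj : Set (Set X)) (A : Set X) : Prop :=
  ∀ U ∈ μj, A ⊆ U → gCl μi A ⊆ U

/-- `A` is `g_{μi}`-open with respect to `μj`. -/
def GOpenWrt {X : Type*} (μi μj : Set (Set X)) (A : Set X) : Prop :=
  GClosedWrt μi μj Aᶜ

/-- `A` is `λ_{μi}`-closed with respect to `μj`. -/
def LamClosedWrt {X : Type*} (μi μj : Set (Set X)) (A : Set X) : Prop :=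
  ∃ F L : Set X, gClosedSet μi F ∧ IsWedgeSet μj L ∧ A = F ∩ L

/-- `A` is `λ_{μi}`-open with respect to `μj`. -/
def LamOpenWrt {X : Type*} (μi μj : Set (Set X)) (A : Set X) : Prop :=
  LamClosedWrt μi μj Aᶜ

/-- `A` is pairwise `λ`-closed. -/
def PairwiseLamClosed {X : Type*} (μ1 μ2 : Set (Set X)) (A : Set X) : Prop :=
  ∃ F1 F2 L1 L2 : Set X, gClosedSet μ1 F1 ∧ gClosedSet μ2 F2 ∧
    IsWedgeSet μ1 L1 ∧ IsWedgeSet μ2 L2 ∧ A = (F1 ∩ F2) ∩ (L1 ∩ L2)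

def PairwiseT0 {X : Type*} (μ1 μ2 : Set (Set X)) : Prop :=
  ∀ x y : X, x ≠ y →
    (∃ U ∈ μ1, x ∈ U ∧ y ∉ U) ∨ (∃ V ∈ μ2, y ∈ V ∧ x ∉ V)

def PairwiseT1 {X : Type*} (μ1 μ2 : Set (Set X)) : Prop :=
  ∀ x y : X, x ≠ y →
    (∃ U ∈ μ1, x ∈ U ∧ y ∉ U) ∧ (∃ V ∈ μ2, y ∈ V ∧ x ∉ V)

def PairwiseSymmetric {X : Type*} (μ1 μ2 : Set (Set X)) : Prop :=
  ∀ x y : X, (x ∈ gCl μ1 {y} → y ∈ gCl μ2 {x}) ∧ (x ∈ gCl μ2 {y} → y ∈ gCl μ1 {x})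

def PairwiseTHalf {X : Type*} (μ1 μ2 : Set (Set X)) : Prop :=
  (∀ A : Set X, GClosedWrt μ1 μ2 A → gClosedSet μ1 A) ∧
  (∀ A : Set X, GClosedWrt μ2 μ1 A → gClosedSet μ2 A)

def PairwiseR0 {X : Type*} (μ1 μ2 : Set (Set X)) : Prop :=
  (∀ G ∈ μ1, ∀ x ∈ G, gCl μ2 {x} ⊆ G) ∧ (∀ G ∈ μ2, ∀ x ∈ G, gCl μ1 {x} ⊆ G)

def PairwiseLamSymmetric {X : Type*} (μ1 μ2 : Set (Set X)) : Prop :=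
  ∀ A : Set X, PairwiseLamClosed μ1 μ2 A →
    LamClosedWrt μ1 μ2 A ∧ LamClosedWrt μ2 μ1 A

/-- `A` and `B` are μ-weakly separated. -/
def MuWeaklySeparated {X : Type*} (μ : Set (Set X)) (A B : Set X) : Prop :=
  ∃ U ∈ μ, ∃ V ∈ μ, A ⊆ U ∧ B ⊆ V ∧ A ∩ V = ∅ ∧ B ∩ U = ∅

def PairwiseTQuarter {X : Type*} (μ1 μ2 : Set (Set X)) : Prop :=
  ∀ P : Set X, P.Finite → ∀ y ∉ P,
    ∃ A : Set X, P ⊆ A ∧ y ∉ A ∧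
      (A ∈ μ1 ∨ A ∈ μ2 ∨ gClosedSet μ1 A ∨ gClosedSet μ2 A)

def PairwiseTThreeEighths {X : Type*} (μ1 μ2 : Set (Set X)) : Prop :=
  ∀ P : Set X, P.Countable → ∀ y ∉ P,
    ∃ A : Set X, P ⊆ A ∧ y ∉ A ∧
      (A ∈ μ1 ∨ A ∈ μ2 ∨ gClosedSet μ1 A ∨ gClosedSet μ2 A)

def PairwiseTFiveEighths {X : Type*} (μ1 μ2 : Set (Set X)) : Prop :=
  ∀ P : Set X, ∀ y ∉ P,
    ∃ A : Set X, P ⊆ A ∧ y ∉ A ∧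
      (A ∈ μ1 ∨ A ∈ μ2 ∨ gClosedSet μ1 A ∨ gClosedSet μ2 A)

/-!
In a pairwise T1 space a point outside `A` is missed by the union of the `μj`-open sets that miss
it, and that union covers `A`; hence every set is a `∧_{μj}`-set. A set that is `g_{μi}`-closed
with respect to `μj` has its `μi`-closure inside every `μj`-open superset, so inside `A^∧_{μj} = A`,
and is therefore `μi`-closed.
-/

section GenTop

variable {X : Type*} {μ : Set (Set X)}

lemma subset_gCl (A : Set X) : A ⊆ gCl μ A :=
  fun _ hx _ hF => hF.2 hx

lemma compl_gCl (A : Set X) : (gCl μ A)ᶜ = ⋃₀ {U | U ∈ μ ∧ A ⊆ Uᶜ} := by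
  ext x
  simp only [gCl, gClosedSet, mem_compl_iff, mem_sInter, mem_sUnion, mem_ofPred_eq, not_forall,
    exists_prop]
  constructor
  · rintro ⟨F, ⟨hF, hAF⟩, hxF⟩
    exact ⟨Fᶜ, ⟨hF, by rwa [compl_compl]⟩, hxF⟩
  · rintro ⟨U, ⟨hU, hAU⟩, hxU⟩
    exact ⟨Uᶜ, ⟨by rwa [compl_compl], hAU⟩, not_not_intro hxU⟩

lemma gClosedSet_gCl (h : IsGenTop μ) (A : Set X) : gClosedSet μ (gCl μ A) := by
  rw [gClosedSet, compl_gCl]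
  exact h.2 _ fun _ hU => hU.1

lemma gClosedSet_of_gCl_subset (h : IsGenTop μ) {A : Set X} (hA : gCl μ A ⊆ A) :
    gClosedSet μ A := by
  rw [Subset.antisymm (subset_gCl A) hA]
  exact gClosedSet_gCl h A

lemma isWedgeSet_of_separates (h : IsGenTop μ)
    (hs : ∀ x y : X, x ≠ y → ∃ U ∈ μ, x ∈ U ∧ y ∉ U) (A : Set X) : IsWedgeSet μ A := by
  refine Subset.antisymm (fun _ hx _ hU => hU.2 hx) fun x hx => ?_
  by_contra hxA
  let U := ⋃₀ {V | V ∈ μ ∧ x ∉ V}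
  have hAU : A ⊆ U := fun a ha =>
    let ⟨V, hV, haV, hxV⟩ := hs a x fun hax => hxA (hax ▸ ha)
    ⟨V, ⟨hV, hxV⟩, haV⟩
  obtain ⟨V, ⟨_, hxV⟩, hxV'⟩ := mem_sInter.mp hx U ⟨h.2 _ fun _ hV => hV.1, hAU⟩
  exact hxV hxV'

end GenTop

section Pairwise

variable {X : Type*} {μi μj : Set (Set X)}

lemma GClosedWrt.gCl_subset_wedgeOp {A : Set X} (hg : GClosedWrt μi μj A) :
    gCl μi A ⊆ wedgeOp μj A :=
  fun _ hx _ hU => hg _ hU.1 hU.2 hx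

lemma GClosedWrt.gClosedSet_of_isWedgeSet (hi : IsGenTop μi) {A : Set X}
    (hg : GClosedWrt μi μj A) (hA : IsWedgeSet μj A) : gClosedSet μi A :=
  gClosedSet_of_gCl_subset hi <| hg.gCl_subset_wedgeOp.trans (Eq.symm hA).subset

lemma PairwiseT1.symm (hT1 : PairwiseT1 μi μj) : PairwiseT1 μj μi :=
  fun x y hxy => (hT1 y x hxy.symm).symm

lemma PairwiseT1.gClosedSet_of_gClosedWrt (hi : IsGenTop μi) (hj : IsGenTop μj)
    (hT1 : PairwiseT1 μi μj) {A : Set X} (hg : GClosedWrt μi μj A) : gClosedSet μi A :=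
  hg.gClosedSet_of_isWedgeSet hi <|
    isWedgeSet_of_separates hj (fun x y hxy => (hT1 y x hxy.symm).2) A

end Pairwise

theorem stmt15_general {X : Type*} (μ1 μ2 : Set (Set X))
    (h1 : IsGenTop μ1) (h2 : IsGenTop μ2)
    (hT1 : PairwiseT1 μ1 μ2) :
    PairwiseTHalf μ1 μ2 :=
  ⟨fun _ => hT1.gClosedSet_of_gClosedWrt h1 h2, fun _ => hT1.symm.gClosedSet_of_gClosedWrt h2 h1⟩

theorem stmt15 {X : Type*} (μ1 μ2 : Set (Set X))
    (h1 : IsGenTop μ1) (h2 : IsGenTop μ2)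
    (hT1 : PairwiseT1 μ1 μ2) (hsym : PairwiseLamSymmetric μ1 μ2) :
    PairwiseTHalf μ1 μ2 :=
  stmt15_general μ1 μ2 h1 h2 hT1
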